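/- arXiv:2001.01218 — 5 statements merged into one kernel-verified Lean document; each statement's English description precedes it below -/
import Mathlib

section
/- Let n ≥ 2 and let M_n be the (n−1)×(n−1) integer matrix with rows and columns indexed by 1,…,n−1 whose (i,j) entry is 1 if i+j ≥ n and 0 otherwise (this is the matrix of the compressed zero divisor graph of ℤ_{p^n}). Then the characteristic polynomial det(λI − M_n) equals λ^{n−1} + Σ_{k=1}^{n−1} (−1)^{⌈k/2⌉} · C(⌊(n−1+k)/2⌋, k) · λ^{n−1−k}, where C(a,b) denotes the binomial coefficient. -/
/-!
Right-multiplying `λI - M_n` by the upper triangular all-ones matrix `U` (of determinant `1`)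
turns it into `λ(I - N) - J`, with `N` the superdiagonal shift and `J` the antidiagonal, since
`(I - N)U = I` and `JU = M_n`. Expanding `D_m(e) = det(x(I - N) + eJ)` along its first column
gives `D_{m+2}(e) = x² D_m(e) + e D_{m+1}(-e)`: the entry `x` leaves a minor whose last row
is `x` times a unit vector, and the entry `e` leaves minus the transpose of the same kind of
matrix with `-e`. The binomial sum of the theorem, taken with a general `e` in place of `-1`, obeys
the same recursion by Pascal's rule.
-/

open Polynomial

/-- The `(n-1) × (n-1)` integer matrix of the compressed zero divisor graph of
`ℤ_{p^n}`: rows and columns are indexed by `1, …, n-1` (via `Fin (n-1)`, where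
the index `i : Fin (n-1)` represents the vertex `i+1`), and the `(i,j)` entry
is `1` if `i + j ≥ n` and `0` otherwise. -/
def compressedZdMatrix (n : ℕ) : Matrix (Fin (n - 1)) (Fin (n - 1)) ℤ :=
  fun i j => if n ≤ (i : ℕ) + 1 + ((j : ℕ) + 1) then 1 else 0

open Finset

section SignedChooseSum

variable {R : Type*} [CommRing R]

theorem neg_one_pow_succ_div_two (k : ℕ) :
    (-1 : R) ^ ((k + 1) / 2) = (-1) ^ k * (-1) ^ (k / 2) := by
  obtain ⟨j, rfl | rfl⟩ := Nat.even_or_odd' k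
  · rw [show (2 * j + 1) / 2 = j by omega, show 2 * j / 2 = j by omega, pow_mul]
    simp
  · rw [show (2 * j + 1 + 1) / 2 = j + 1 by omega, show (2 * j + 1) / 2 = j by omega, pow_succ,
      pow_succ, pow_mul]
    simp

def signedChooseTerm (x e : R) (m k : ℕ) : R :=
  e ^ k * (-1) ^ (k / 2) * ((m + k) / 2).choose k * x ^ (m - k)

def signedChooseSum (x e : R) (m : ℕ) : R :=
  ∑ k ∈ range (m + 1), signedChooseTerm x e m k

variable (x e : R)

theorem signedChooseTerm_eq_zero {m k : ℕ} (h : m < k) : signedChooseTerm x e m k = 0 := by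
  simp [signedChooseTerm, Nat.choose_eq_zero_of_lt (show (m + k) / 2 < k by omega)]

theorem signedChooseSum_eq_sum_range {m N : ℕ} (h : m < N) :
    signedChooseSum x e m = ∑ k ∈ range N, signedChooseTerm x e m k :=
  sum_subset (range_subset_range.2 h) fun k _ hk ↦
    signedChooseTerm_eq_zero x e (by simpa using hk)

theorem signedChooseTerm_add_two_succ (m k : ℕ) :
    signedChooseTerm x e (m + 2) (k + 1) =
      x ^ 2 * signedChooseTerm x e m (k + 1) + e * signedChooseTerm x (-e) (m + 1) k := by
  have hpow : x ^ 2 * (((m + (k + 1)) / 2).choose (k + 1) * x ^ (m - (k + 1))) =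
      ((m + (k + 1)) / 2).choose (k + 1) * x ^ (m + 1 - k) := by
    -- for `m ≤ k` the exponents differ by truncated subtraction, but the binomial vanishes
    rcases lt_or_ge k m with hk | hk
    · rw [mul_left_comm, ← pow_add]; congr 2; omega
    · simp [Nat.choose_eq_zero_of_lt (show (m + (k + 1)) / 2 < k + 1 by omega)]
  have hpascal : ((m + 2 + (k + 1)) / 2).choose (k + 1) =
      ((m + (k + 1)) / 2).choose (k + 1) + ((m + 1 + k) / 2).choose k := by
    rw [show (m + 2 + (k + 1)) / 2 = (m + 1 + k) / 2 + 1 by omega, Nat.choose_succ_succ',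
      show (m + (k + 1)) / 2 = (m + 1 + k) / 2 by omega, add_comm]
  simp only [signedChooseTerm, hpascal, neg_one_pow_succ_div_two, Nat.cast_add,
    show m + 2 - (k + 1) = m + 1 - k by omega]
  linear_combination e ^ (k + 1) * (-1) ^ k * (-1) ^ (k / 2) * hpow.symm

theorem signedChooseSum_zero : signedChooseSum x e 0 = 1 := by
  simp [signedChooseSum, signedChooseTerm]

theorem signedChooseSum_one : signedChooseSum x e 1 = x + e := by
  simp [signedChooseSum, signedChooseTerm, sum_range_succ]

theorem signedChooseSum_add_two (m : ℕ) :
    signedChooseSum x e (m + 2) =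
      x ^ 2 * signedChooseSum x e m + e * signedChooseSum x (-e) (m + 1) := by
  rw [signedChooseSum_eq_sum_range x e (show m < m + 3 by omega), signedChooseSum,
    signedChooseSum, sum_range_succ', sum_range_succ' _ (m + 2)]
  have hfirst : signedChooseTerm x e (m + 2) 0 = x ^ 2 * signedChooseTerm x e m 0 := by
    simp [signedChooseTerm, pow_add, mul_comm]
  simp only [signedChooseTerm_add_two_succ, sum_add_distrib, mul_add, mul_sum, hfirst]
  ring

theorem signedChooseSum_neg_one (m : ℕ) :
    signedChooseSum x (-1) m =
      x ^ m + ∑ k ∈ Icc 1 m, (-1) ^ ((k + 1) / 2) * ((m + k) / 2).choose k * x ^ (m - k) := by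
  rw [signedChooseSum, Nat.range_succ_eq_Icc_zero, ← insert_Icc_add_one_left_eq_Icc m.zero_le,
    sum_insert (by simp)]
  simp [signedChooseTerm, neg_one_pow_succ_div_two]

end SignedChooseSum

theorem Fin.sum_univ_ite_val_eq {M : Type*} [AddCommMonoid M] (m a : ℕ) (c : M) :
    ∑ k : Fin m, (if (k : ℕ) = a then c else 0) = if a < m then c else 0 := by
  simp [Fin.sum_univ_eq_sum_range (fun k ↦ if k = a then c else 0)]

namespace Matrix

variable {R : Type*} [CommRing R]

/-- `x (I - N) + e J`, with the antidiagonal `J` moved `s` steps towards the top left corner. -/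
def bidiagAntidiag (x e : R) (m s : ℕ) : Matrix (Fin m) (Fin m) R :=
  of fun i j =>
    (if (j : ℕ) = i then x else if (j : ℕ) = i + 1 then -x else 0) +
      if (i + j + s + 1 : ℕ) = m then e else 0

variable (R) in
def upperOnes (m : ℕ) : Matrix (Fin m) (Fin m) R :=
  of fun i j => if i ≤ j then 1 else 0

variable (R) in
theorem det_upperOnes (m : ℕ) : (upperOnes R m).det = 1 := by
  rw [det_of_isUpperTriangular (M := upperOnes R m) fun i j hij ↦ if_neg (not_le.2 hij)]
  simp [upperOnes]

variable (x e : R)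

theorem bidiagAntidiag_mul_upperOnes (m : ℕ) :
    bidiagAntidiag x e m 0 * upperOnes R m =
      of fun i j : Fin m =>
        (if i = j then x else 0) + if m ≤ (i : ℕ) + j + 1 then e else 0 := by
  ext i j
  have hsplit (k : ℕ) : ((if k = (i : ℕ) then x else if k = i + 1 then -x else 0) +
      (if (i + k + 0 + 1 : ℕ) = m then e else 0)) * (if k ≤ (j : ℕ) then 1 else 0) =
      (if k = i then (if i ≤ (j : ℕ) then x else 0) else 0) +
      (if k = i + 1 then (if i + 1 ≤ (j : ℕ) then -x else 0) else 0) +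
      (if k = m - 1 - i then (if m - 1 - i ≤ (j : ℕ) then e else 0) else 0) := by
    have := i.is_lt
    grind
  simp only [mul_apply, bidiagAntidiag, upperOnes, of_apply, Fin.le_def, hsplit, sum_add_distrib,
    Fin.sum_univ_ite_val_eq, Fin.ext_iff]
  have := i.is_lt
  have := j.is_lt
  grind

theorem det_bidiagAntidiag_succ_succ (m s : ℕ) :
    (bidiagAntidiag x e (m + 1) (s + 1)).det = x * (bidiagAntidiag x e m s).det := by
  have hlast (j : Fin (m + 1)) : bidiagAntidiag x e (m + 1) (s + 1) (Fin.last m) j =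
      if j = Fin.last m then x else 0 := by
    simp only [bidiagAntidiag, of_apply, Fin.val_last, Fin.ext_iff]
    grind
  have hminor : (bidiagAntidiag x e (m + 1) (s + 1)).submatrix Fin.castSucc Fin.castSucc =
      bidiagAntidiag x e m s := by
    ext i j
    simp only [submatrix_apply, bidiagAntidiag, of_apply, Fin.val_castSucc]
    grind
  rw [det_succ_row _ (Fin.last m)]
  simp [hlast, hminor, ← two_mul, pow_mul]

theorem det_bidiagAntidiag_add_two (m : ℕ) :
    (bidiagAntidiag x e (m + 2) 0).det =
      x * (bidiagAntidiag x e (m + 1) 1).det + e * (bidiagAntidiag x (-e) (m + 1) 0).det := by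
  have hfirst : bidiagAntidiag x e (m + 2) 0 0 0 = x := by simp [bidiagAntidiag]
  have hlast : bidiagAntidiag x e (m + 2) 0 (Fin.last (m + 1)) 0 = e := by simp [bidiagAntidiag]
  have hmiddle (i : Fin m) : bidiagAntidiag x e (m + 2) 0 i.castSucc.succ 0 = 0 := by
    simp only [bidiagAntidiag, of_apply, Fin.val_succ, Fin.val_castSucc, Fin.val_zero]
    grind
  have htop : (bidiagAntidiag x e (m + 2) 0).submatrix Fin.succ Fin.succ =
      bidiagAntidiag x e (m + 1) 1 := by
    ext i j
    simp only [submatrix_apply, bidiagAntidiag, of_apply, Fin.val_succ]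
    grind
  have hbottom : (bidiagAntidiag x e (m + 2) 0).submatrix (Fin.last (m + 1)).succAbove
      Fin.succ = -(bidiagAntidiag x (-e) (m + 1) 0)ᵀ := by
    ext i j
    simp only [Fin.succAbove_last, submatrix_apply, bidiagAntidiag, of_apply, Fin.val_succ,
      Fin.val_castSucc, neg_apply, transpose_apply]
    grind
  have hsign : ((-1) ^ (m + 1) * (-1) ^ (m + 1) : R) = 1 := by
    rw [← pow_add, ← two_mul, pow_mul]; simp
  rw [det_succ_column_zero, Fin.sum_univ_succ, Fin.sum_univ_castSucc,
    sum_eq_zero fun i _ ↦ by rw [hmiddle, mul_zero, zero_mul], zero_add, Fin.succ_last,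
    Fin.succAbove_zero, hfirst, hlast, htop, hbottom, det_neg, det_transpose, Fintype.card_fin,
    Fin.val_zero, Fin.val_last, Nat.succ_eq_add_one]
  linear_combination e * (bidiagAntidiag x (-e) (m + 1) 0).det * hsign

theorem det_bidiagAntidiag (m : ℕ) :
    (bidiagAntidiag x e m 0).det = signedChooseSum x e m := by
  induction m using Nat.twoStepInduction generalizing e with
  | zero => simp [signedChooseSum_zero]
  | one => simp [bidiagAntidiag, signedChooseSum_one]
  | more m ih₀ ih₁ =>
    rw [det_bidiagAntidiag_add_two, det_bidiagAntidiag_succ_succ, ih₀, ih₁,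
      signedChooseSum_add_two]
    ring

end Matrix

open Matrix in
theorem charmatrix_compressedZdMatrix (n : ℕ) :
    charmatrix (compressedZdMatrix n) =
      bidiagAntidiag X (-1) (n - 1) 0 * upperOnes ℤ[X] (n - 1) := by
  rw [bidiagAntidiag_mul_upperOnes]
  ext i j
  have := i.is_lt
  simp only [charmatrix_apply, compressedZdMatrix, diagonal_apply, of_apply]
  grind

theorem charpoly_compressedZdMatrix_general (n : ℕ) :
    (compressedZdMatrix n).charpoly =
      X ^ (n - 1) +
        ∑ k ∈ Finset.Icc 1 (n - 1),
          (-1) ^ ((k + 1) / 2) * (Nat.choose ((n - 1 + k) / 2) k : ℤ[X]) * X ^ (n - 1 - k) := by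
  rw [Matrix.charpoly, charmatrix_compressedZdMatrix, Matrix.det_mul, Matrix.det_upperOnes,
    mul_one, Matrix.det_bidiagAntidiag, signedChooseSum_neg_one]

theorem charpoly_compressedZdMatrix (n : ℕ) (hn : 2 ≤ n) :
    (compressedZdMatrix n).charpoly =
      X ^ (n - 1) +
        ∑ k ∈ Finset.Icc 1 (n - 1),
          (-1) ^ ((k + 1) / 2) * (Nat.choose ((n - 1 + k) / 2) k : ℤ[X]) * X ^ (n - 1 - k) :=
  charpoly_compressedZdMatrix_general n
end

section
/- Let n ≥ 2 be even and let G_n be the simple graph on vertex set {1,…,n−1} in which distinct vertices i and j are adjacent iff i+j ≥ n (the compressed zero divisor graph of ℤ_{p^n}). Then the Wiener index of G_n equals (n−2)(3n−4)/4. -/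
/-!
The vertex `n - 1` is adjacent to every other vertex, so any two non-adjacent vertices are at
distance 2 and the Wiener index is `C(n-1, 2)` plus the number of non-adjacent pairs. For
`n = 2m + 2` these are the pairs `a < b` with `a + b ≤ 2m + 1`; for each `a ≤ m` there are
`2(m - a) + 1` choices of `b`, so there are `m²` of them, and `m(2m+1) + m² = (n-2)(3n-4)/4`.
-/

/-- The compressed zero divisor graph of `ℤ_{p^n}`: the simple graph on the
vertex set `{1, …, n-1}` (modelled by `Fin (n-1)`, where `i : Fin (n-1)`
represents the vertex `i+1`) in which distinct vertices `i` and `j` are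
adjacent iff `i + j ≥ n`. -/
def compressedZdGraph (n : ℕ) : SimpleGraph (Fin (n - 1)) where
  Adj i j := i ≠ j ∧ n ≤ (i : ℕ) + 1 + ((j : ℕ) + 1)
  symm := by constructor; intro i j h; exact ⟨h.1.symm, by omega⟩
  loopless := by constructor; intro i h; exact h.1 rfl

open Finset

namespace SimpleGraph

variable {V : Type*} {G : SimpleGraph V} {c u v : V}

lemma dist_eq_of_forall_adj [DecidableRel G.Adj] (hc : ∀ w, w ≠ c → G.Adj c w) (huv : u ≠ v) :
    G.dist u v = if G.Adj u v then 1 else 2 := by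
  split_ifs with hadj
  · exact dist_eq_one_iff_adj.mpr hadj
  · have hu : u ≠ c := by rintro rfl; exact hadj (hc v huv.symm)
    have hv : v ≠ c := by rintro rfl; exact hadj (hc u huv).symm
    have h2 : G.edist u v = 2 :=
      edist_eq_two_iff.mpr ⟨huv, hadj, c, ⟨(hc u hu).symm, (hc v hv).symm⟩⟩
    simp [dist, h2]

lemma sum_dist_filter_lt_of_forall_adj [Fintype V] [LinearOrder V] [DecidableRel G.Adj]
    (hc : ∀ w, w ≠ c → G.Adj c w) :
    ∑ p ∈ univ.filter (fun p : V × V => p.1 < p.2), G.dist p.1 p.2 =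
      (Fintype.card V).choose 2 + #{p : V × V | p.1 < p.2 ∧ ¬G.Adj p.1 p.2} := by
  have hdist : ∀ p ∈ univ.filter (fun p : V × V => p.1 < p.2),
      G.dist p.1 p.2 = 1 + if ¬G.Adj p.1 p.2 then 1 else 0 := by
    intro p hp
    rw [dist_eq_of_forall_adj hc (mem_filter.mp hp).2.ne]
    split_ifs <;> rfl
  rw [sum_congr rfl hdist, sum_add_distrib, sum_boole, filter_filter, card_eq_sum_ones,
    ← Fintype.card_product_filter_lt, card_eq_sum_ones]
  simp

end SimpleGraph

lemma sum_range_two_mul_add_one (m : ℕ) : ∑ i ∈ range m, (2 * i + 1) = m ^ 2 := by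
  induction m with
  | zero => rfl
  | succ m ih => rw [sum_range_succ, ih]; ring

lemma card_filter_lt_and_add_lt (m : ℕ) :
    #{p : Fin (2 * m + 1) × Fin (2 * m + 1) | p.1 < p.2 ∧ (p.1 : ℕ) + p.2 < 2 * m} = m ^ 2 := by
  have hslice (i : Fin (2 * m + 1)) :
      #{j : Fin (2 * m + 1) | i < j ∧ (i : ℕ) + j < 2 * m} = 2 * m - i - i - 1 := by
    have : ({j | i < j ∧ (i : ℕ) + j < 2 * m} : Finset _) = Ioo i i.rev := by
      ext j; simp only [mem_filter, mem_univ, true_and, mem_Ioo, Fin.lt_def, Fin.val_rev]; omega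
    rw [this, Fin.card_Ioo, Fin.val_rev]
    omega
  calc _ = ∑ i : Fin (2 * m + 1), #{j : Fin (2 * m + 1) | i < j ∧ (i : ℕ) + j < 2 * m} := by
        rw [card_filter, Fintype.sum_prod_type]
        simp only [card_filter]
    _ = ∑ i ∈ range (2 * m + 1), (2 * m - i - i - 1) := by
        simp only [hslice]
        exact Fin.sum_univ_eq_sum_range (fun i => 2 * m - i - i - 1) _
    _ = ∑ i ∈ range m, (2 * (m - 1 - i) + 1) := by
        rw [← sum_range_add_sum_Ico _ (by omega : m ≤ 2 * m + 1),
          sum_eq_zero (s := Ico _ _) (fun i hi => by rw [mem_Ico] at hi; omega), add_zero]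
        exact sum_congr rfl (fun i hi => by rw [mem_range] at hi; omega)
    _ = m ^ 2 := by rw [sum_range_reflect (fun i => 2 * i + 1), sum_range_two_mul_add_one]

instance inst_s6 (n : ℕ) : DecidableRel (compressedZdGraph n).Adj :=
  fun i j => inferInstanceAs (Decidable (i ≠ j ∧ _))

lemma compressedZdGraph_exists_forall_adj {n : ℕ} (hn : 2 ≤ n) :
    ∃ c, ∀ v, v ≠ c → (compressedZdGraph n).Adj c v :=
  ⟨⟨n - 2, by omega⟩, fun v hv => ⟨hv.symm, by simp only; omega⟩⟩

lemma compressedZdGraph_not_adj_iff {n : ℕ} {i j : Fin (n - 1)} (hij : i ≠ j) :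
    ¬(compressedZdGraph n).Adj i j ↔ (i : ℕ) + j + 2 < n := by
  simp only [compressedZdGraph, hij, ne_eq, not_false_eq_true, true_and, not_le]
  omega

lemma card_not_adj_compressedZdGraph (m : ℕ) :
    #{p : Fin (2 * m + 2 - 1) × Fin (2 * m + 2 - 1) |
      p.1 < p.2 ∧ ¬(compressedZdGraph (2 * m + 2)).Adj p.1 p.2} = m ^ 2 := by
  rw [← card_filter_lt_and_add_lt m]
  congr 1
  ext p
  simp only [mem_filter, mem_univ, true_and]
  exact and_congr_right fun (h : p.1 < p.2) =>
    (compressedZdGraph_not_adj_iff h.ne).trans (by omega)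

theorem wiener_compressedZdGraph_even (n : ℕ) (hn : 2 ≤ n) (heven : Even n) :
    (∑ p ∈ Finset.univ.filter (fun p : Fin (n - 1) × Fin (n - 1) => p.1 < p.2),
        (compressedZdGraph n).dist p.1 p.2) = (n - 2) * (3 * n - 4) / 4 := by
  obtain ⟨c, hc⟩ := compressedZdGraph_exists_forall_adj hn
  obtain ⟨m, rfl⟩ : ∃ m, n = 2 * m + 2 := ⟨n / 2 - 1, by obtain ⟨k, hk⟩ := heven; omega⟩
  rw [SimpleGraph.sum_dist_filter_lt_of_forall_adj hc, Fintype.card_fin,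
    card_not_adj_compressedZdGraph, Nat.choose_two_right]
  obtain ⟨h₁, h₂, h₃⟩ : 2 * m + 2 - 1 = 2 * m + 1 ∧ 2 * m + 2 - 2 = 2 * m ∧
      3 * (2 * m + 2) - 4 = 2 * (3 * m + 1) := by omega
  rw [h₁, Nat.add_sub_cancel, h₂, h₃, show (2 * m + 1) * (2 * m) = m * (2 * m + 1) * 2 by ring,
    show 2 * m * (2 * (3 * m + 1)) = m * (3 * m + 1) * 4 by ring,
    Nat.mul_div_cancel _ two_pos, Nat.mul_div_cancel _ four_pos]
  ring
end

section
/- Let n ≥ 3 be odd and let G_n be the simple graph on vertex set {1,…,n−1} in which distinct vertices i and j are adjacent iff i+j ≥ n (the compressed zero divisor graph of ℤ_{p^n}). Then the Wiener index of G_n equals (n−1)(3n−7)/4. -/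
open Finset

theorem Finset.sum_filter_fst_lt_snd {α M : Type*} [Fintype α] [LinearOrder α]
    [LocallyFiniteOrderBot α] [AddCommMonoid M] (f : α → α → M) :
    ∑ p ∈ univ.filter (fun p : α × α => p.1 < p.2), f p.1 p.2 =
      ∑ j, ∑ i ∈ Iio j, f i j :=
  sum_finset_product_right' _ _ _ (by simp)

theorem sum_range_ite_le_add_eq_min (n j : ℕ) (hj : j + 2 ≤ n) :
    ∑ i ∈ range j, (if n ≤ i + j + 2 then 1 else 2) = min (2 * j) (n - 2) := by
  obtain ⟨a, ha⟩ : ∃ a, a = min j (n - 2 - j) := ⟨_, rfl⟩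
  obtain ⟨b, rfl⟩ : ∃ b, j = a + b := ⟨j - a, by omega⟩
  have below : ∀ i ∈ range a, (if n ≤ i + (a + b) + 2 then 1 else 2) = 2 := fun i hi => by
    rw [mem_range] at hi
    rw [if_neg (by omega)]
  have above : ∀ i ∈ range b, (if n ≤ a + i + (a + b) + 2 then 1 else 2) = 1 := fun i hi => by
    rw [mem_range] at hi
    rw [if_pos (by omega)]
  rw [sum_range_add, sum_congr rfl below, sum_congr rfl above]
  simp only [sum_const, card_range, smul_eq_mul]
  omega

theorem sum_range_min_two_mul (k : ℕ) :
    ∑ j ∈ range (2 * k), min (2 * j) (2 * k - 1) = k * (3 * k - 2) := by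
  have below : ∀ j ∈ range k, min (2 * j) (2 * k - 1) = 2 * j := fun j hj => by
    rw [mem_range] at hj
    omega
  have above : ∀ j ∈ range k, min (2 * (k + j)) (2 * k - 1) = 2 * k - 1 := fun j _ => by omega
  have hgauss := sum_range_id_mul_two k
  rw [show range (2 * k) = range (k + k) by rw [two_mul], sum_range_add, sum_congr rfl below,
    sum_congr rfl above, ← mul_sum, sum_const, card_range, smul_eq_mul]
  rcases k with _ | m
  · rfl
  · rw [show 2 * (m + 1) - 1 = 2 * m + 1 by omega, show 3 * (m + 1) - 2 = 3 * m + 1 by omega]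
    rw [Nat.add_sub_cancel] at hgauss
    linear_combination hgauss

namespace SimpleGraph

variable {V : Type*} {G : SimpleGraph V}

theorem dist_eq_two_of_mem_commonNeighbors {u v w : V} (huv : u ≠ v) (hadj : ¬G.Adj u v)
    (hw : w ∈ G.commonNeighbors u v) : G.dist u v = 2 := by
  rw [dist, edist_eq_two_iff.mpr ⟨huv, hadj, w, hw⟩]
  rfl

theorem dist_eq_ite_of_forall_adj {w : V} (hw : ∀ x, x ≠ w → G.Adj w x) {u v : V}
    (huv : u ≠ v) [Decidable (G.Adj u v)] : G.dist u v = if G.Adj u v then 1 else 2 := by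
  split_ifs with hadj
  · exact dist_eq_one_iff_adj.mpr hadj
  · have hu : u ≠ w := fun h => hadj (h ▸ hw v (h ▸ huv.symm))
    have hv : v ≠ w := fun h => hadj (h ▸ (hw u (h ▸ huv)).symm)
    exact dist_eq_two_of_mem_commonNeighbors huv hadj ⟨(hw u hu).symm, (hw v hv).symm⟩

end SimpleGraph

namespace compressedZdGraph

variable {n : ℕ}

theorem adj_iff {i j : Fin (n - 1)} :
    (compressedZdGraph n).Adj i j ↔ i ≠ j ∧ n ≤ (i : ℕ) + (j : ℕ) + 2 :=
  and_congr_right fun _ => by omega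

theorem adj_of_val_eq {i j : Fin (n - 1)} (hi : (i : ℕ) = n - 2) (hij : i ≠ j) :
    (compressedZdGraph n).Adj i j :=
  adj_iff.mpr ⟨hij, by omega⟩

theorem dist_of_lt {i j : Fin (n - 1)} (hij : i < j) :
    (compressedZdGraph n).dist i j = if n ≤ (i : ℕ) + (j : ℕ) + 2 then 1 else 2 := by
  classical
  let top : Fin (n - 1) := ⟨n - 2, by omega⟩
  rw [SimpleGraph.dist_eq_ite_of_forall_adj (w := top) (fun x hx => adj_of_val_eq rfl hx.symm)
    hij.ne]
  simp only [adj_iff, hij.ne, ne_eq, not_false_eq_true, true_and]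

theorem sum_dist_Iio (j : Fin (n - 1)) :
    ∑ i ∈ Iio j, (compressedZdGraph n).dist i j = min (2 * (j : ℕ)) (n - 2) := by
  rw [sum_congr rfl fun i hi => dist_of_lt (mem_Iio.mp hi),
    ← sum_range_ite_le_add_eq_min n j (by omega), ← Nat.Iio_eq_range,
    ← Fin.map_valEmbedding_Iio, sum_map]
  rfl

end compressedZdGraph

theorem wiener_compressedZdGraph_odd_general (n : ℕ) (hodd : Odd n) :
    (∑ p ∈ Finset.univ.filter (fun p : Fin (n - 1) × Fin (n - 1) => p.1 < p.2),
        (compressedZdGraph n).dist p.1 p.2) = (n - 1) * (3 * n - 7) / 4 := by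
  obtain ⟨k, rfl⟩ := hodd
  rw [sum_filter_fst_lt_snd, Fintype.sum_congr _ _ compressedZdGraph.sum_dist_Iio,
    Fin.sum_univ_eq_sum_range (fun j => min (2 * j) (2 * k + 1 - 2)),
    show 2 * k + 1 - 1 = 2 * k by omega, show 2 * k + 1 - 2 = 2 * k - 1 by omega,
    sum_range_min_two_mul, show 3 * (2 * k + 1) - 7 = 2 * (3 * k - 2) by omega,
    show 2 * k * (2 * (3 * k - 2)) = 4 * (k * (3 * k - 2)) by ring,
    Nat.mul_div_cancel_left _ four_pos]

theorem wiener_compressedZdGraph_odd (n : ℕ) (hn : 3 ≤ n) (hodd : Odd n) :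
    (∑ p ∈ Finset.univ.filter (fun p : Fin (n - 1) × Fin (n - 1) => p.1 < p.2),
        (compressedZdGraph n).dist p.1 p.2) = (n - 1) * (3 * n - 7) / 4 :=
  wiener_compressedZdGraph_odd_general n hodd
end

section
/- Let n ≥ 3 and let G_n be the simple graph on vertex set {1,…,n−1} in which distinct vertices i and j are adjacent iff i+j ≥ n (the compressed zero divisor graph of ℤ_{p^n}). Then for all distinct vertices i, j: the shortest-path distance satisfies d(i,j) = 1 if i+j ≥ n, and d(i,j) = 2 if i+j < n. In particular G_n is connected with diameter at most 2. -/
namespace SimpleGraph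

variable {V : Type*} {G : SimpleGraph V}

lemma diam_le_of_ediam_le {k : ℕ} (h : G.ediam ≤ k) : G.diam ≤ k :=
  ENat.toNat_le_of_le_natCast h

lemma dist_eq_two_of_ediam_le_two (h : G.ediam ≤ 2) {u v : V} (hne : u ≠ v)
    (hnadj : ¬G.Adj u v) : G.dist u v = 2 := by
  have : Nonempty V := ⟨u⟩
  have hfin : G.ediam ≠ ⊤ := ne_top_of_le_ne_top (by decide) h
  exact le_antisymm ((dist_le_diam hfin).trans (diam_le_of_ediam_le h))
    ((connected_of_ediam_ne_top hfin).one_lt_dist_of_ne_of_not_adj hne hnadj)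

end SimpleGraph

open SimpleGraph

lemma compressedZdGraph_eccent_le_one {n : ℕ} (h : n - 2 < n - 1) :
    (compressedZdGraph n).eccent ⟨n - 2, h⟩ ≤ 1 :=
  (eccent_le_one_iff _).2 fun v hv ↦ ⟨hv, show n ≤ n - 2 + 1 + ((v : ℕ) + 1) by omega⟩

lemma compressedZdGraph_ediam_le_two {n : ℕ} (hn : 2 ≤ n) : (compressedZdGraph n).ediam ≤ 2 :=
  calc (compressedZdGraph n).ediam
      ≤ 2 * (compressedZdGraph n).eccent ⟨n - 2, by omega⟩ := ediam_le_two_mul_eccent _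
    _ ≤ 2 * 1 := by gcongr; exact compressedZdGraph_eccent_le_one _
    _ = 2 := mul_one 2

theorem dist_compressedZdGraph (n : ℕ) (hn : 3 ≤ n) :
    (∀ i j : Fin (n - 1), i ≠ j →
        (n ≤ (i : ℕ) + 1 + ((j : ℕ) + 1) → (compressedZdGraph n).dist i j = 1) ∧
        ((i : ℕ) + 1 + ((j : ℕ) + 1) < n → (compressedZdGraph n).dist i j = 2)) ∧
      (compressedZdGraph n).Connected ∧ (compressedZdGraph n).diam ≤ 2 := by
  have hdiam := compressedZdGraph_ediam_le_two (by omega : 2 ≤ n)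
  have : Nonempty (Fin (n - 1)) := ⟨⟨0, by omega⟩⟩
  refine ⟨fun i j hij ↦ ⟨fun h ↦ dist_eq_one_iff_adj.2 ⟨hij, h⟩, fun h ↦ ?_⟩,
    connected_of_ediam_ne_top (ne_top_of_le_ne_top (by decide) hdiam), diam_le_of_ediam_le hdiam⟩
  exact dist_eq_two_of_ediam_le_two hdiam hij fun hadj ↦ by have := hadj.2; omega
end

section
/- Let n ≥ 2 and let G_n be the simple graph on vertex set {1,…,n−1} in which distinct vertices i and j are adjacent iff i+j ≥ n. Then the number of edges of G_n equals (n−1)(n−2)/2 − ⌊(n−2)²/4⌋. -/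
instance (n : ℕ) : DecidableRel (compressedZdGraph n).Adj :=
  fun i j => inferInstanceAs (Decidable (i ≠ j ∧ n ≤ (i : ℕ) + 1 + ((j : ℕ) + 1)))

open Finset

theorem Nat.eq_sub_div_of_four_mul_add {n e : ℕ} (h : 4 * e + 2 * (n / 2) = n * (n - 1)) :
    e = (n - 1) * (n - 2) / 2 - (n - 2) ^ 2 / 4 := by
  obtain ⟨k, rfl | rfl⟩ := Nat.even_or_odd' n <;> rcases k with _ | k
  all_goals ring_nf at h ⊢; grind

theorem Fin.card_filter_le_val (n m : ℕ) : #{i : Fin n | m ≤ (i : ℕ)} = n - m := by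
  have := card_filter_add_card_filter_not (s := univ) (fun i : Fin n => (i : ℕ) < m)
  simp only [Fin.card_filter_val_lt, not_lt, card_univ, Fintype.card_fin] at this
  omega

theorem Fin.sum_val_add_one_mul_two (n : ℕ) :
    (∑ i : Fin (n - 1), ((i : ℕ) + 1)) * 2 = n * (n - 1) := by
  rw [Fin.sum_univ_eq_sum_range (· + 1)]
  rcases n with _ | m
  · simp
  · rw [Nat.add_sub_cancel, ← add_zero (∑ i ∈ range m, (i + 1)), ← sum_range_succ' (fun i => i),
      sum_range_id_mul_two, Nat.add_sub_cancel]

@[simp]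
theorem compressedZdGraph_adj {n : ℕ} {i j : Fin (n - 1)} :
    (compressedZdGraph n).Adj i j ↔ i ≠ j ∧ n ≤ (i : ℕ) + 1 + ((j : ℕ) + 1) :=
  Iff.rfl

namespace compressedZdGraph

theorem neighborFinset_eq (n : ℕ) (v : Fin (n - 1)) :
    (compressedZdGraph n).neighborFinset v =
      ({j | n - 2 - v ≤ (j : ℕ)} : Finset (Fin (n - 1))).erase v := by
  ext j
  simp only [SimpleGraph.mem_neighborFinset, compressedZdGraph_adj, mem_erase, mem_filter,
    mem_univ, true_and, ne_comm (a := j)]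
  have := j.isLt
  exact and_congr_right fun _ => by omega

theorem degree_add_ite (n : ℕ) (v : Fin (n - 1)) :
    (compressedZdGraph n).degree v + (if n ≤ 2 * ((v : ℕ) + 1) then 1 else 0) = v + 1 := by
  rw [← SimpleGraph.card_neighborFinset_eq_degree, neighborFinset_eq, card_erase_eq_ite,
    Fin.card_filter_le_val]
  have := v.isLt
  split_ifs <;> simp only [mem_filter, mem_univ, true_and] at * <;> omega

theorem four_mul_card_edgeFinset_add (n : ℕ) :
    4 * #(compressedZdGraph n).edgeFinset + 2 * (n / 2) = n * (n - 1) := by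
  have hsum := sum_congr rfl fun v (_ : v ∈ univ) => degree_add_ite n v
  rw [sum_add_distrib, SimpleGraph.sum_degrees_eq_twice_card_edges, ← card_filter] at hsum
  have hhalf : #({v | n ≤ 2 * ((v : ℕ) + 1)} : Finset (Fin (n - 1))) = n / 2 := by
    rw [filter_congr (q := fun v : Fin (n - 1) => (n - 1) / 2 ≤ (v : ℕ)) (by intros; omega),
      Fin.card_filter_le_val]
    omega
  have := Fin.sum_val_add_one_mul_two n
  omega

end compressedZdGraph

theorem card_edges_compressedZdGraph_general (n : ℕ) :
    (compressedZdGraph n).edgeFinset.card = (n - 1) * (n - 2) / 2 - (n - 2) ^ 2 / 4 :=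
  Nat.eq_sub_div_of_four_mul_add (compressedZdGraph.four_mul_card_edgeFinset_add n)

/-- The number of edges of the compressed zero divisor graph equals
`(n-1)(n-2)/2 − ⌊(n-2)²/4⌋`. -/
theorem card_edges_compressedZdGraph (n : ℕ) (hn : 2 ≤ n) :
    (compressedZdGraph n).edgeFinset.card = (n - 1) * (n - 2) / 2 - (n - 2) ^ 2 / 4 :=
  card_edges_compressedZdGraph_general n
end
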